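/- arXiv:1804.06706 — 2 statements merged into one kernel-verified Lean document; each statement's English description precedes it below -/
import Mathlib

section
/- Let θ₀ > 0, k ∈ ℕ (k ≥ 0), ε ∈ {−1, 1}, and set μ := kπ/θ₀. Define v_x(θ) := cos(μθ) and v_θ(θ) := ε·sin(μθ). Then for every θ ∈ [0, θ₀]: v_x''(θ) − v_x(θ) − 2·v_θ'(θ) = −(μ + ε)²·v_x(θ) and v_θ''(θ) − v_θ(θ) + 2·v_x'(θ) = −(μ + ε)²·v_θ(θ); moreover the boundary conditions v_x'(0) = v_x'(θ₀) = 0 and v_θ(0) = v_θ(θ₀) = 0 hold. In other words, (v_x, v_θ) is an eigenfunction of the operator (v_x, v_θ) ↦ (v_x'' − v_x − 2v_θ', v_θ'' − v_θ + 2v_x') with mixed Neumann/Dirichlet boundary conditions, with eigenvalue −(kπ/θ₀ + ε)². -/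
open Real Set

/-! The derivatives of `cos (μ t)` and `ε sin (μ t)` turn both components of the operator into
multiples of the original functions: the first gives `-(μ² + 1 + 2εμ) cos (μ t)`, the second
`-(μ² + 1 + 2μ/ε) ε sin (μ t)`, and `ε² = 1` makes both factors `-(μ + ε)²`. The boundary
conditions reduce to `sin (kπ) = 0`. -/

lemma hasDerivAt_cos_mul (μ t : ℝ) : HasDerivAt (fun t => cos (μ * t)) (-μ * sin (μ * t)) t := by
  simpa [mul_comm] using ((hasDerivAt_id t).const_mul μ).cos

lemma hasDerivAt_sin_mul (μ t : ℝ) : HasDerivAt (fun t => sin (μ * t)) (μ * cos (μ * t)) t := by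
  simpa [mul_comm] using ((hasDerivAt_id t).const_mul μ).sin

lemma deriv_cos_mul (μ : ℝ) : deriv (fun t => cos (μ * t)) = fun t => -μ * sin (μ * t) :=
  funext fun t => (hasDerivAt_cos_mul μ t).deriv

lemma deriv_sin_mul (μ : ℝ) : deriv (fun t => sin (μ * t)) = fun t => μ * cos (μ * t) :=
  funext fun t => (hasDerivAt_sin_mul μ t).deriv

lemma deriv_deriv_cos_mul (μ : ℝ) :
    deriv (deriv fun t => cos (μ * t)) = fun t => -μ ^ 2 * cos (μ * t) := by
  rw [deriv_cos_mul, deriv_const_mul_field', deriv_sin_mul]; ext; ring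

lemma deriv_deriv_sin_mul (μ : ℝ) :
    deriv (deriv fun t => sin (μ * t)) = fun t => -μ ^ 2 * sin (μ * t) := by
  rw [deriv_sin_mul, deriv_const_mul_field', deriv_cos_mul]; ext; ring

lemma cos_sin_eigenpair_fst {ε : ℝ} (hε : ε ^ 2 = 1) (μ θ : ℝ) :
    deriv (deriv fun t => cos (μ * t)) θ - cos (μ * θ) - 2 * deriv (fun t => ε * sin (μ * t)) θ =
      -(μ + ε) ^ 2 * cos (μ * θ) := by
  rw [deriv_deriv_cos_mul, deriv_const_mul_field', deriv_sin_mul]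
  linear_combination cos (μ * θ) * hε

lemma cos_sin_eigenpair_snd {ε : ℝ} (hε : ε ^ 2 = 1) (μ θ : ℝ) :
    deriv (deriv fun t => ε * sin (μ * t)) θ - ε * sin (μ * θ) +
        2 * deriv (fun t => cos (μ * t)) θ =
      -(μ + ε) ^ 2 * (ε * sin (μ * θ)) := by
  rw [deriv_const_mul_field', deriv_const_mul_field', deriv_deriv_sin_mul, deriv_cos_mul]
  linear_combination (2 * μ + ε) * sin (μ * θ) * hε

lemma sin_nat_mul_pi_div_mul_self (k : ℕ) (a : ℝ) : sin (k * π / a * a) = 0 := by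
  rcases eq_or_ne a 0 with rfl | ha
  · simp
  · rw [div_mul_cancel₀ _ ha, sin_nat_mul_pi]

theorem stmt4_general (θ₀ : ℝ) (k : ℕ) (ε : ℝ) (hε : ε = 1 ∨ ε = -1) :
    (∀ θ ∈ Set.Icc 0 θ₀,
      deriv (deriv (fun t => Real.cos (k * π / θ₀ * t))) θ
          - Real.cos (k * π / θ₀ * θ)
          - 2 * deriv (fun t => ε * Real.sin (k * π / θ₀ * t)) θ =
        -(k * π / θ₀ + ε) ^ 2 * Real.cos (k * π / θ₀ * θ) ∧
      deriv (deriv (fun t => ε * Real.sin (k * π / θ₀ * t))) θ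
          - ε * Real.sin (k * π / θ₀ * θ)
          + 2 * deriv (fun t => Real.cos (k * π / θ₀ * t)) θ =
        -(k * π / θ₀ + ε) ^ 2 * (ε * Real.sin (k * π / θ₀ * θ))) ∧
    deriv (fun t => Real.cos (k * π / θ₀ * t)) 0 = 0 ∧
    deriv (fun t => Real.cos (k * π / θ₀ * t)) θ₀ = 0 ∧
    ε * Real.sin (k * π / θ₀ * 0) = 0 ∧
    ε * Real.sin (k * π / θ₀ * θ₀) = 0 := by
  have hε2 : ε ^ 2 = 1 := by rcases hε with rfl | rfl <;> norm_num
  refine ⟨fun θ _ => ⟨cos_sin_eigenpair_fst hε2 _ θ, cos_sin_eigenpair_snd hε2 _ θ⟩,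
    ?_, ?_, by simp, by simp [sin_nat_mul_pi_div_mul_self]⟩
  · simp [deriv_cos_mul]
  · simp [deriv_cos_mul, sin_nat_mul_pi_div_mul_self]

/-- The pairs `(cos(kπθ/θ₀), ±sin(kπθ/θ₀))` are eigenfunctions of the transformed angular
operator `(v_x, v_θ) ↦ (v_x'' − v_x − 2v_θ', v_θ'' − v_θ + 2v_x')` with mixed
Neumann/Dirichlet boundary conditions, with eigenvalue `−(kπ/θ₀ ± 1)²`. -/
theorem stmt4 (θ₀ : ℝ) (hθ₀ : 0 < θ₀) (k : ℕ) (ε : ℝ) (hε : ε = 1 ∨ ε = -1) :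
    (∀ θ ∈ Set.Icc 0 θ₀,
      deriv (deriv (fun t => Real.cos (k * π / θ₀ * t))) θ
          - Real.cos (k * π / θ₀ * θ)
          - 2 * deriv (fun t => ε * Real.sin (k * π / θ₀ * t)) θ =
        -(k * π / θ₀ + ε) ^ 2 * Real.cos (k * π / θ₀ * θ) ∧
      deriv (deriv (fun t => ε * Real.sin (k * π / θ₀ * t))) θ
          - ε * Real.sin (k * π / θ₀ * θ)
          + 2 * deriv (fun t => Real.cos (k * π / θ₀ * t)) θ =
        -(k * π / θ₀ + ε) ^ 2 * (ε * Real.sin (k * π / θ₀ * θ))) ∧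
    deriv (fun t => Real.cos (k * π / θ₀ * t)) 0 = 0 ∧
    deriv (fun t => Real.cos (k * π / θ₀ * t)) θ₀ = 0 ∧
    ε * Real.sin (k * π / θ₀ * 0) = 0 ∧
    ε * Real.sin (k * π / θ₀ * θ₀) = 0 :=
  stmt4_general θ₀ k ε hε
end

section
/- Let θ₀ ∈ (0, π), β ∈ ℝ, and let v = (v_x, v_θ) : ℝ×(0,θ₀) → ℝ² be twice continuously differentiable. Define u : G → ℝ² by u(ψ(x, θ)) := e^{βx}·O(θ)·(v_x(x,θ), v_θ(x,θ)). Then u is twice continuously differentiable on G and for all (x, θ) ∈ ℝ×(0,θ₀): (Δu)(ψ(x, θ)) = e^{(β−2)x}·O(θ)·(w_x(x,θ), w_θ(x,θ)), where Δ acts componentwise as ∂₁² + ∂₂², w_x = ∂_x²v_x + 2β∂_x v_x + β²v_x + ∂_θ²v_x − v_x − 2∂_θ v_θ, and w_θ = ∂_x²v_θ + 2β∂_x v_θ + β²v_θ + ∂_θ²v_θ − v_θ + 2∂_θ v_x. -/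
/-!
Under `ℂ ≅ ℝ²` the map `ψ` is the complex exponential, so on the wedge `u` is `e^{βx} O(θ) v`
composed with the principal logarithm, which gives its regularity. By the chain rule, `∂ₓ(h ∘ ψ)`
and `∂_θ(h ∘ ψ)` are the Euler derivative `y · ∇h` and the angular derivative `y^⊥ · ∇h` taken at
`ψ`, and in Cartesian coordinates `(y · ∇)² + (y^⊥ · ∇)² = |y|² Δ`; hence `Δ(u ∘ ψ) = e^{2x} (Δu) ∘ ψ`.
Finally `∂ₓ` and `∂_θ` act on `e^{γx} O(θ) (f, g)` as `γ + ∂ₓ` and `J + ∂_θ`, where `O' = O J` with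
`J (f, g) = (-g, f)`; as `J² = -1`, applying each twice gives `r_β(∂ₓ) + 𝒯_θ`.
-/

open Real Set

/-- The Euler/polar transform `ψ(x, θ) = (eˣ cos θ, eˣ sin θ)`. -/
noncomputable def psiW (q : ℝ × ℝ) : ℝ × ℝ :=
  (Real.exp q.1 * Real.cos q.2, Real.exp q.1 * Real.sin q.2)

/-- The planar wedge of opening angle `θ₀`. -/
def wedge (θ₀ : ℝ) : Set (ℝ × ℝ) :=
  {y | ∃ r θ : ℝ, 0 < r ∧ 0 < θ ∧ θ < θ₀ ∧ y = (r * Real.cos θ, r * Real.sin θ)}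

/-- The layer `ℝ × (0, θ₀)`. -/
def layer (θ₀ : ℝ) : Set (ℝ × ℝ) := Set.univ ×ˢ Set.Ioo 0 θ₀

/-- The rotation matrix `O(θ)` with rows `(cos θ, −sin θ)` and `(sin θ, cos θ)`. -/
noncomputable def Orot (θ : ℝ) (v : ℝ × ℝ) : ℝ × ℝ :=
  (Real.cos θ * v.1 - Real.sin θ * v.2, Real.sin θ * v.1 + Real.cos θ * v.2)

/-- Partial derivative in the first variable. -/
noncomputable def pd1 (f : ℝ × ℝ → ℝ) (q : ℝ × ℝ) : ℝ := fderiv ℝ f q (1, 0)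

/-- Partial derivative in the second variable. -/
noncomputable def pd2 (f : ℝ × ℝ → ℝ) (q : ℝ × ℝ) : ℝ := fderiv ℝ f q (0, 1)

/-- The componentwise Laplacian `Δ = ∂₁² + ∂₂²` of a planar vector field. -/
noncomputable def lap2 (f : ℝ × ℝ → ℝ × ℝ) (y : ℝ × ℝ) : ℝ × ℝ :=
  fderiv ℝ (fun z => fderiv ℝ f z (1, 0)) y (1, 0) +
    fderiv ℝ (fun z => fderiv ℝ f z (0, 1)) y (0, 1)

open Filter Topology

section PartialDerivatives

variable {E : Type*} [NormedAddCommGroup E] [NormedSpace ℝ E]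

-- `pd1` and `pd2` for vector-valued maps; on scalar maps they are `pd1` and `pd2` by definition.
noncomputable def dFst (f : ℝ × ℝ → E) (q : ℝ × ℝ) : E := fderiv ℝ f q (1, 0)

noncomputable def dSnd (f : ℝ × ℝ → E) (q : ℝ × ℝ) : E := fderiv ℝ f q (0, 1)

lemma fderiv_apply_eq_dFst_add_dSnd (f : ℝ × ℝ → E) (q v : ℝ × ℝ) :
    fderiv ℝ f q v = v.1 • dFst f q + v.2 • dSnd f q := by
  conv_lhs => rw [show v = v.1 • ((1 : ℝ), (0 : ℝ)) + v.2 • ((0 : ℝ), (1 : ℝ)) by ext <;> simp]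
  rw [map_add, map_smul, map_smul]
  rfl

lemma lap2_eq_dFst_dFst_add_dSnd_dSnd (f : ℝ × ℝ → ℝ × ℝ) (y : ℝ × ℝ) :
    lap2 f y = dFst (dFst f) y + dSnd (dSnd f) y :=
  rfl

lemma dFst_congr {f g : ℝ × ℝ → E} {q : ℝ × ℝ} (h : f =ᶠ[𝓝 q] g) : dFst f q = dFst g q := by
  rw [dFst, dFst, h.fderiv_eq]

lemma dSnd_congr {f g : ℝ × ℝ → E} {q : ℝ × ℝ} (h : f =ᶠ[𝓝 q] g) : dSnd f q = dSnd g q := by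
  rw [dSnd, dSnd, h.fderiv_eq]

lemma dFst_add {f g : ℝ × ℝ → E} {q : ℝ × ℝ} (hf : DifferentiableAt ℝ f q)
    (hg : DifferentiableAt ℝ g q) : dFst (fun p => f p + g p) q = dFst f q + dFst g q := by
  rw [dFst, fderiv_fun_add hf hg]
  rfl

lemma dSnd_add {f g : ℝ × ℝ → E} {q : ℝ × ℝ} (hf : DifferentiableAt ℝ f q)
    (hg : DifferentiableAt ℝ g q) : dSnd (fun p => f p + g p) q = dSnd f q + dSnd g q := by
  rw [dSnd, fderiv_fun_add hf hg]
  rfl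

lemma dFst_const_smul (c : ℝ) (f : ℝ × ℝ → E) (q : ℝ × ℝ) :
    dFst (fun p => c • f p) q = c • dFst f q := by
  change fderiv ℝ (c • f) q (1, 0) = _
  rw [fderiv_const_smul_field]
  rfl

lemma ContDiffAt.dFst {n : WithTop ℕ∞} {f : ℝ × ℝ → E} {q : ℝ × ℝ}
    (hf : ContDiffAt ℝ (n + 1) f q) : ContDiffAt ℝ n (dFst f) q :=
  (hf.fderiv_right le_rfl).clm_apply contDiffAt_const

lemma ContDiffAt.dSnd {n : WithTop ℕ∞} {f : ℝ × ℝ → E} {q : ℝ × ℝ}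
    (hf : ContDiffAt ℝ (n + 1) f q) : ContDiffAt ℝ n (dSnd f) q :=
  (hf.fderiv_right le_rfl).clm_apply contDiffAt_const

lemma ContDiffAt.eventually_differentiableAt {f : ℝ × ℝ → E} {q : ℝ × ℝ}
    (hf : ContDiffAt ℝ 2 f q) : ∀ᶠ p in 𝓝 q, DifferentiableAt ℝ f p :=
  (hf.eventually (by simp)).mono fun _ hp => hp.differentiableAt (by simp)

noncomputable def eulerDeriv (f : ℝ × ℝ → E) (y : ℝ × ℝ) : E := fderiv ℝ f y y

noncomputable def angularDeriv (f : ℝ × ℝ → E) (y : ℝ × ℝ) : E := fderiv ℝ f y (-y.2, y.1)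

lemma eulerDeriv_eq (f : ℝ × ℝ → E) :
    eulerDeriv f = fun y => y.1 • dFst f y + y.2 • dSnd f y :=
  funext fun y => fderiv_apply_eq_dFst_add_dSnd f y y

lemma angularDeriv_eq (f : ℝ × ℝ → E) :
    angularDeriv f = fun y => (-y.2) • dFst f y + y.1 • dSnd f y :=
  funext fun y => fderiv_apply_eq_dFst_add_dSnd f y (-y.2, y.1)

lemma ContDiffAt.differentiableAt_eulerDeriv {u : ℝ × ℝ → E} {y : ℝ × ℝ}
    (hu : ContDiffAt ℝ 2 u y) : DifferentiableAt ℝ (eulerDeriv u) y :=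
  ((hu.fderiv_right (m := 1) le_rfl).differentiableAt one_ne_zero).clm_apply differentiableAt_id

lemma ContDiffAt.differentiableAt_angularDeriv {u : ℝ × ℝ → E} {y : ℝ × ℝ}
    (hu : ContDiffAt ℝ 2 u y) : DifferentiableAt ℝ (angularDeriv u) y :=
  ((hu.fderiv_right (m := 1) le_rfl).differentiableAt one_ne_zero).clm_apply (by fun_prop)

lemma eulerDeriv_eulerDeriv_add_angularDeriv_angularDeriv {u : ℝ × ℝ → E} {y : ℝ × ℝ}
    (hu : ContDiffAt ℝ 2 u y) :
    eulerDeriv (eulerDeriv u) y + angularDeriv (angularDeriv u) y =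
      (y.1 ^ 2 + y.2 ^ 2) • (dFst (dFst u) y + dSnd (dSnd u) y) := by
  have h₁ : HasFDerivAt (dFst u) (fderiv ℝ (dFst u) y) y :=
    ((hu.dFst (n := 1)).differentiableAt one_ne_zero).hasFDerivAt
  have h₂ : HasFDerivAt (dSnd u) (fderiv ℝ (dSnd u) y) y :=
    ((hu.dSnd (n := 1)).differentiableAt one_ne_zero).hasFDerivAt
  have hE := (hasFDerivAt_fst.fun_smul h₁).fun_add (hasFDerivAt_snd.fun_smul h₂)
  have hneg : HasFDerivAt (fun z : ℝ × ℝ => -z.2) (-ContinuousLinearMap.snd ℝ ℝ ℝ) y :=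
    hasFDerivAt_snd.fun_neg
  have hA := (hneg.fun_smul h₁).fun_add (hasFDerivAt_fst.fun_smul h₂)
  rw [eulerDeriv, angularDeriv, eulerDeriv_eq, angularDeriv_eq, hE.fderiv, hA.fderiv]
  simp only [add_apply, smul_apply, neg_apply, ContinuousLinearMap.smulRight_apply,
    ContinuousLinearMap.coe_fst', ContinuousLinearMap.coe_snd',
    fderiv_apply_eq_dFst_add_dSnd (dFst u), fderiv_apply_eq_dFst_add_dSnd (dSnd u)]
  module

end PartialDerivatives

section PolarMap

variable {E : Type*} [NormedAddCommGroup E] [NormedSpace ℝ E]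

lemma fderiv_psiW_apply (q v : ℝ × ℝ) :
    fderiv ℝ psiW q v = v.1 • psiW q + v.2 • (-(psiW q).2, (psiW q).1) := by
  have h : HasFDerivAt psiW _ q :=
    ((hasFDerivAt_fst (p := q)).exp.fun_mul (hasFDerivAt_snd (p := q)).cos).prodMk
      ((hasFDerivAt_fst (p := q)).exp.fun_mul (hasFDerivAt_snd (p := q)).sin)
  rw [h.fderiv]
  ext <;> simp only [ContinuousLinearMap.prod_apply, add_apply, smul_apply, smul_eq_mul,
    ContinuousLinearMap.coe_fst', ContinuousLinearMap.coe_snd', psiW, Prod.smul_mk,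
    Prod.mk_add_mk] <;> ring

lemma differentiable_psiW : Differentiable ℝ psiW := by
  unfold psiW
  fun_prop

lemma psiW_fst_sq_add_snd_sq (q : ℝ × ℝ) : (psiW q).1 ^ 2 + (psiW q).2 ^ 2 = exp (2 * q.1) := by
  rw [psiW, show 2 * q.1 = q.1 + q.1 by ring, exp_add]
  linear_combination (exp q.1 * exp q.1) * sin_sq_add_cos_sq q.2

lemma dFst_comp_psiW {h : ℝ × ℝ → E} {q : ℝ × ℝ} (hh : DifferentiableAt ℝ h (psiW q)) :
    dFst (h ∘ psiW) q = eulerDeriv h (psiW q) := by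
  rw [dFst, fderiv_comp q hh (differentiable_psiW q), ContinuousLinearMap.comp_apply,
    fderiv_psiW_apply]
  simp [eulerDeriv]

lemma dSnd_comp_psiW {h : ℝ × ℝ → E} {q : ℝ × ℝ} (hh : DifferentiableAt ℝ h (psiW q)) :
    dSnd (h ∘ psiW) q = angularDeriv h (psiW q) := by
  rw [dSnd, fderiv_comp q hh (differentiable_psiW q), ContinuousLinearMap.comp_apply,
    fderiv_psiW_apply]
  simp [angularDeriv]

lemma dFst_dFst_add_dSnd_dSnd_comp_psiW {u : ℝ × ℝ → E} {q : ℝ × ℝ}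
    (hu : ContDiffAt ℝ 2 u (psiW q)) :
    dFst (dFst (u ∘ psiW)) q + dSnd (dSnd (u ∘ psiW)) q =
      exp (2 * q.1) • (dFst (dFst u) (psiW q) + dSnd (dSnd u) (psiW q)) := by
  have hu' : ∀ᶠ p in 𝓝 q, DifferentiableAt ℝ u (psiW p) :=
    (differentiable_psiW.continuous.tendsto q).eventually hu.eventually_differentiableAt
  rw [dFst_congr (g := eulerDeriv u ∘ psiW) (hu'.mono fun p hp => dFst_comp_psiW hp),
    dSnd_congr (g := angularDeriv u ∘ psiW) (hu'.mono fun p hp => dSnd_comp_psiW hp),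
    dFst_comp_psiW hu.differentiableAt_eulerDeriv,
    dSnd_comp_psiW hu.differentiableAt_angularDeriv,
    eulerDeriv_eulerDeriv_add_angularDeriv_angularDeriv hu, psiW_fst_sq_add_snd_sq]

end PolarMap

section InversePolarMap

open Complex in
noncomputable def psiInv (y : ℝ × ℝ) : ℝ × ℝ := equivRealProdCLM (log (equivRealProdCLM.symm y))

open Complex in
lemma psiW_eq_exp (q : ℝ × ℝ) : psiW q = equivRealProdCLM (exp (equivRealProdCLM.symm q)) := by
  ext <;> simp [psiW, exp_re, exp_im]

open Complex in
lemma psiInv_psiW {q : ℝ × ℝ} (hq : q.2 ∈ Ioc (-π) π) : psiInv (psiW q) = q := by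
  rw [psiInv, psiW_eq_exp, ContinuousLinearEquiv.symm_apply_apply,
    log_exp (by simpa using hq.1) (by simpa using hq.2), ContinuousLinearEquiv.apply_symm_apply]

open Complex in
lemma equivRealProdCLM_symm_mem_slitPlane {y : ℝ × ℝ} (hy : 0 < y.2) :
    equivRealProdCLM.symm y ∈ slitPlane :=
  mem_slitPlane_iff.2 (Or.inr (by simpa using hy.ne'))

open Complex in
lemma psiW_psiInv {y : ℝ × ℝ} (hy : 0 < y.2) : psiW (psiInv y) = y := by
  rw [psiInv, psiW_eq_exp, ContinuousLinearEquiv.symm_apply_apply, Complex.exp_log,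
    ContinuousLinearEquiv.apply_symm_apply]
  exact slitPlane_ne_zero (equivRealProdCLM_symm_mem_slitPlane hy)

open Complex in
lemma contDiffAt_psiInv {n : WithTop ℕ∞} {y : ℝ × ℝ} (hy : 0 < y.2) : ContDiffAt ℝ n psiInv y :=
  equivRealProdCLM.contDiff.contDiffAt.comp y <|
    ((contDiffAt_log (equivRealProdCLM_symm_mem_slitPlane hy)).restrict_scalars ℝ).comp y
      equivRealProdCLM.symm.contDiff.contDiffAt

lemma psiW_mem_wedge {θ₀ : ℝ} {q : ℝ × ℝ} (hq : q ∈ layer θ₀) : psiW q ∈ wedge θ₀ :=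
  ⟨exp q.1, q.2, exp_pos _, hq.2.1, hq.2.2, rfl⟩

lemma mem_wedge_iff {θ₀ : ℝ} (hθ₀ : θ₀ ≤ π) {y : ℝ × ℝ} :
    y ∈ wedge θ₀ ↔ 0 < y.2 ∧ psiInv y ∈ layer θ₀ := by
  constructor
  · rintro ⟨r, θ, hr, hθ, hθθ₀, rfl⟩
    have hθπ : θ < π := hθθ₀.trans_le hθ₀
    have hψ : psiW (log r, θ) = (r * cos θ, r * sin θ) := by simp [psiW, exp_log hr]
    refine ⟨mul_pos hr (sin_pos_of_pos_of_lt_pi hθ hθπ), ?_⟩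
    rw [← hψ, psiInv_psiW ⟨by linarith [pi_pos], hθπ.le⟩]
    exact ⟨trivial, hθ, hθθ₀⟩
  · rintro ⟨hy, hψ⟩
    rw [← psiW_psiInv hy]
    exact psiW_mem_wedge hψ

lemma isOpen_layer (θ₀ : ℝ) : IsOpen (layer θ₀) := isOpen_univ.prod isOpen_Ioo

lemma isOpen_wedge {θ₀ : ℝ} (hθ₀ : θ₀ ≤ π) : IsOpen (wedge θ₀) := by
  rw [show wedge θ₀ = {y | 0 < y.2} ∩ psiInv ⁻¹' layer θ₀ from Set.ext fun _ => mem_wedge_iff hθ₀]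
  exact ContinuousOn.isOpen_inter_preimage
    (fun _ hy => (contDiffAt_psiInv (n := 0) hy).continuousAt.continuousWithinAt)
    (isOpen_lt continuous_const continuous_snd) (isOpen_layer θ₀)

end InversePolarMap

section RotatedField

noncomputable def rotField (γ : ℝ) (f g : ℝ × ℝ → ℝ) (p : ℝ × ℝ) : ℝ × ℝ :=
  exp (γ * p.1) • Orot p.2 (f p, g p)

variable {γ : ℝ} {f g : ℝ × ℝ → ℝ} {p : ℝ × ℝ}

lemma ContDiffAt.rotField {n : WithTop ℕ∞} (hf : ContDiffAt ℝ n f p) (hg : ContDiffAt ℝ n g p) :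
    ContDiffAt ℝ n (rotField γ f g) p := by
  unfold _root_.rotField Orot
  fun_prop

lemma DifferentiableAt.rotField (hf : DifferentiableAt ℝ f p) (hg : DifferentiableAt ℝ g p) :
    DifferentiableAt ℝ (rotField γ f g) p := by
  unfold _root_.rotField Orot
  fun_prop

lemma fderiv_rotField_apply (hf : DifferentiableAt ℝ f p) (hg : DifferentiableAt ℝ g p)
    (v : ℝ × ℝ) : fderiv ℝ (rotField γ f g) p v =
      v.1 • (γ • rotField γ f g p + rotField γ (pd1 f) (pd1 g) p) +
        v.2 • (rotField γ (-g) f p + rotField γ (pd2 f) (pd2 g) p) := by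
  have h : HasFDerivAt (rotField γ f g) _ p :=
    ((hasFDerivAt_fst (p := p)).const_mul γ).exp.fun_smul
      ((((hasFDerivAt_snd (p := p)).cos.fun_mul hf.hasFDerivAt).fun_sub
        ((hasFDerivAt_snd (p := p)).sin.fun_mul hg.hasFDerivAt)).prodMk
      (((hasFDerivAt_snd (p := p)).sin.fun_mul hf.hasFDerivAt).fun_add
        ((hasFDerivAt_snd (p := p)).cos.fun_mul hg.hasFDerivAt)))
  rw [h.fderiv]
  ext <;> simp only [rotField, Orot, pd1, pd2, dFst, dSnd, fderiv_apply_eq_dFst_add_dSnd f p v,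
    fderiv_apply_eq_dFst_add_dSnd g p v, ContinuousLinearMap.prod_apply, add_apply, sub_apply,
    smul_apply, ContinuousLinearMap.smulRight_apply, ContinuousLinearMap.coe_fst',
    ContinuousLinearMap.coe_snd', smul_eq_mul, Prod.smul_mk, Prod.mk_add_mk, Pi.neg_apply] <;> ring

lemma dFst_rotField (hf : DifferentiableAt ℝ f p) (hg : DifferentiableAt ℝ g p) :
    dFst (rotField γ f g) p = γ • rotField γ f g p + rotField γ (pd1 f) (pd1 g) p := by
  simp [dFst, fderiv_rotField_apply hf hg]

lemma dSnd_rotField (hf : DifferentiableAt ℝ f p) (hg : DifferentiableAt ℝ g p) :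
    dSnd (rotField γ f g) p = rotField γ (-g) f p + rotField γ (pd2 f) (pd2 g) p := by
  simp [dSnd, fderiv_rotField_apply hf hg]

lemma dFst_dFst_rotField (hf : ContDiffAt ℝ 2 f p) (hg : ContDiffAt ℝ 2 g p) :
    dFst (dFst (rotField γ f g)) p = γ ^ 2 • rotField γ f g p +
      (2 * γ) • rotField γ (pd1 f) (pd1 g) p + rotField γ (pd1 (pd1 f)) (pd1 (pd1 g)) p := by
  have hf₁ : ContDiffAt ℝ 1 (pd1 f) p := hf.dFst
  have hg₁ : ContDiffAt ℝ 1 (pd1 g) p := hg.dFst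
  have hfd := hf.differentiableAt two_ne_zero
  have hgd := hg.differentiableAt two_ne_zero
  have hf₁d := hf₁.differentiableAt one_ne_zero
  have hg₁d := hg₁.differentiableAt one_ne_zero
  have hev := hf.eventually_differentiableAt.and hg.eventually_differentiableAt
  rw [dFst_congr (g := fun q => γ • rotField γ f g q + rotField γ (pd1 f) (pd1 g) q)
      (hev.mono fun q hq => dFst_rotField hq.1 hq.2),
    dFst_add ((hfd.rotField hgd).fun_const_smul γ) (hf₁d.rotField hg₁d), dFst_const_smul,
    dFst_rotField hfd hgd, dFst_rotField hf₁d hg₁d]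
  module

lemma dSnd_dSnd_rotField (hf : ContDiffAt ℝ 2 f p) (hg : ContDiffAt ℝ 2 g p) :
    dSnd (dSnd (rotField γ f g)) p = -rotField γ f g p +
      (2 : ℝ) • rotField γ (-pd2 g) (pd2 f) p + rotField γ (pd2 (pd2 f)) (pd2 (pd2 g)) p := by
  have hf₂ : ContDiffAt ℝ 1 (pd2 f) p := hf.dSnd
  have hg₂ : ContDiffAt ℝ 1 (pd2 g) p := hg.dSnd
  have hfd := hf.differentiableAt two_ne_zero
  have hgd := hg.differentiableAt two_ne_zero
  have hf₂d := hf₂.differentiableAt one_ne_zero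
  have hg₂d := hg₂.differentiableAt one_ne_zero
  have hev := hf.eventually_differentiableAt.and hg.eventually_differentiableAt
  rw [dSnd_congr (g := fun q => rotField γ (-g) f q + rotField γ (pd2 f) (pd2 g) q)
      (hev.mono fun q hq => dSnd_rotField hq.1 hq.2),
    dSnd_add (hgd.neg.rotField hfd) (hf₂d.rotField hg₂d),
    dSnd_rotField hgd.neg hfd, dSnd_rotField hf₂d hg₂d]
  ext <;> simp only [rotField, Orot, pd2, fderiv_neg, neg_apply, Pi.neg_apply, Prod.smul_mk,
    smul_eq_mul, Prod.mk_add_mk, Prod.neg_mk] <;> ring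

lemma lap2_rotField (hf : ContDiffAt ℝ 2 f p) (hg : ContDiffAt ℝ 2 g p) :
    lap2 (rotField γ f g) p = rotField γ
      (fun q => pd1 (pd1 f) q + 2 * γ * pd1 f q + γ ^ 2 * f q + pd2 (pd2 f) q - f q - 2 * pd2 g q)
      (fun q => pd1 (pd1 g) q + 2 * γ * pd1 g q + γ ^ 2 * g q + pd2 (pd2 g) q - g q + 2 * pd2 f q)
      p := by
  rw [lap2_eq_dFst_dFst_add_dSnd_dSnd, dFst_dFst_rotField hf hg, dSnd_dSnd_rotField hf hg]
  ext <;> simp only [rotField, Orot, Prod.smul_mk, smul_eq_mul, Prod.mk_add_mk, Prod.neg_mk,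
    Pi.neg_apply] <;> ring

end RotatedField

lemma lap2_congr {f g : ℝ × ℝ → ℝ × ℝ} {y : ℝ × ℝ} (h : f =ᶠ[𝓝 y] g) : lap2 f y = lap2 g y := by
  rw [lap2_eq_dFst_dFst_add_dSnd_dSnd, lap2_eq_dFst_dFst_add_dSnd_dSnd, dFst_congr (h.eventuallyEq_nhds.mono fun _ => dFst_congr),
    dSnd_congr (h.eventuallyEq_nhds.mono fun _ => dSnd_congr)]

/-- Transformation of the Laplacian under the combined polar/Euler transform and rotation
of components: `Δu ∘ ψ = e^{(β−2)x} O(θ) (r_β(∂_x) + 𝒯_θ)(v_x, v_θ)` with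
`r_β(∂_x) = ∂_x² + 2β ∂_x + β²`. -/
theorem stmt8 (θ₀ β : ℝ) (hθ₀ : θ₀ ∈ Set.Ioo 0 π)
    (vx vθ : ℝ × ℝ → ℝ)
    (hvx : ContDiffOn ℝ 2 vx (layer θ₀)) (hvθ : ContDiffOn ℝ 2 vθ (layer θ₀))
    (u : ℝ × ℝ → ℝ × ℝ)
    (hu : ∀ q ∈ layer θ₀, u (psiW q) = Real.exp (β * q.1) • Orot q.2 (vx q, vθ q)) :
    ContDiffOn ℝ 2 u (wedge θ₀) ∧
    ∀ q ∈ layer θ₀,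
      lap2 u (psiW q) =
        Real.exp ((β - 2) * q.1) • Orot q.2
          (pd1 (pd1 vx) q + 2 * β * pd1 vx q + β ^ 2 * vx q
              + pd2 (pd2 vx) q - vx q - 2 * pd2 vθ q,
            pd1 (pd1 vθ) q + 2 * β * pd1 vθ q + β ^ 2 * vθ q
              + pd2 (pd2 vθ) q - vθ q + 2 * pd2 vx q) := by
  have hθ₀π : θ₀ ≤ π := hθ₀.2.le
  have hvx' (q) (hq : q ∈ layer θ₀) := hvx.contDiffAt ((isOpen_layer θ₀).mem_nhds hq)
  have hvθ' (q) (hq : q ∈ layer θ₀) := hvθ.contDiffAt ((isOpen_layer θ₀).mem_nhds hq)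
  have hu_eq : EqOn u (rotField β vx vθ ∘ psiInv) (wedge θ₀) := fun y hy => by
    obtain ⟨hy₂, hyL⟩ := (mem_wedge_iff hθ₀π).1 hy
    calc u y = u (psiW (psiInv y)) := by rw [psiW_psiInv hy₂]
      _ = _ := hu _ hyL
  have hC2 : ContDiffOn ℝ 2 u (wedge θ₀) := fun y hy => by
    obtain ⟨hy₂, hyL⟩ := (mem_wedge_iff hθ₀π).1 hy
    exact (((hvx' _ hyL).rotField (hvθ' _ hyL)).comp y
      (contDiffAt_psiInv hy₂)).contDiffWithinAt.congr hu_eq (hu_eq hy)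
  refine ⟨hC2, fun q hq => ?_⟩
  have hconf : lap2 (u ∘ psiW) q = exp (2 * q.1) • lap2 u (psiW q) := by
    rw [lap2_eq_dFst_dFst_add_dSnd_dSnd, lap2_eq_dFst_dFst_add_dSnd_dSnd,
      dFst_dFst_add_dSnd_dSnd_comp_psiW
        (hC2.contDiffAt ((isOpen_wedge hθ₀π).mem_nhds (psiW_mem_wedge hq)))]
  have hloc : u ∘ psiW =ᶠ[𝓝 q] rotField β vx vθ :=
    eventually_of_mem ((isOpen_layer θ₀).mem_nhds hq) hu
  calc lap2 u (psiW q) = exp (-(2 * q.1)) • lap2 (u ∘ psiW) q := by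
        rw [hconf, smul_smul, ← exp_add, neg_add_cancel, exp_zero, one_smul]
    _ = exp (-(2 * q.1)) • lap2 (rotField β vx vθ) q := by rw [lap2_congr hloc]
    _ = _ := by
        rw [lap2_rotField (hvx' q hq) (hvθ' q hq), rotField, smul_smul, ← exp_add]
        ring_nf
end
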